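/- arXiv:2512.16121 — 4 statements merged into one kernel-verified Lean document; each statement's English description precedes it below -/
import Mathlib

section
/- Let T > 0, let g : ℝ → ℝ be continuous with g(x) → −∞ as x → ∞, and let y, b : [0,T] → ℝ be differentiable on [0,T] with y(0) = y₀ and y'(t) = g(y(t)) + b'(t) for every t ∈ [0,T]. Suppose there exist constants N₀ ≥ 0 and N₁ ≥ 0 such that b(t₂) − b(t₁) ≤ N₀ + N₁(t₂ − t₁) for all 0 ≤ t₁ < t₂ ≤ T, and suppose ξ* ∈ ℝ is such that g(ξ) ≤ −N₁ for all ξ ≥ ξ*. Then y(t) ≤ max{y₀, ξ*} + N₀ for all t ∈ [0,T]. -/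
/-!
Let `s` be the last time in `[0, t]` at which `y ≤ max y₀ ξ*`. On `(s, t]` we have `y > ξ*`,
hence `y' = g(y) + b' ≤ b' - N₁`, so `y t - y s ≤ b t - b s - N₁ (t - s) ≤ N₀`.
-/

open Set

theorem ContinuousOn.exists_le_forall_Ioc_lt {f : ℝ → ℝ} {a c M : ℝ}
    (hf : ContinuousOn f (Icc a c)) (hac : a ≤ c) (ha : f a ≤ M) : ∃ s ∈ Icc a c, f s ≤ M ∧ ∀ x ∈ Ioc s c, M < f x := by
  have hclosed : IsClosed (Icc a c ∩ f ⁻¹' Iic M) :=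
    hf.preimage_isClosed_of_isClosed isClosed_Icc isClosed_Iic
  obtain ⟨s, ⟨hs, hfs⟩, hmax⟩ :=
    (isCompact_Icc.of_isClosed_subset hclosed inter_subset_left).exists_isGreatest
      ⟨a, left_mem_Icc.2 hac, ha⟩
  refine ⟨s, hs, hfs, fun x hx => ?_⟩
  by_contra! hfx
  exact (hmax ⟨⟨hs.1.trans hx.1.le, hx.2⟩, hfx⟩).not_gt hx.1

theorem sub_le_sub_sub_mul_of_hasDerivWithinAt_le {f g f' g' : ℝ → ℝ} {a c K : ℝ} (hac : a ≤ c)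
    (hf : ∀ x ∈ Icc a c, HasDerivWithinAt f (f' x) (Icc a c) x)
    (hg : ∀ x ∈ Icc a c, HasDerivWithinAt g (g' x) (Icc a c) x)
    (hle : ∀ x ∈ Ioo a c, f' x ≤ g' x - K) :
    f c - f a ≤ g c - g a - K * (c - a) := by
  have hderiv : ∀ x ∈ Icc a c,
      HasDerivWithinAt (fun x => f x - g x + K * x) (f' x - g' x + K) (Icc a c) x := fun x hx =>
    ((hf x hx).sub (hg x hx)).add (by simpa using (hasDerivWithinAt_id x _).const_mul K)
  have hanti : AntitoneOn (fun x => f x - g x + K * x) (Icc a c) := by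
    refine antitoneOn_of_hasDerivWithinAt_nonpos (f' := fun x => f' x - g' x + K) (convex_Icc a c)
      (fun x hx => (hderiv x hx).continuousWithinAt) (fun x hx => ?_) (fun x hx => ?_)
    · rw [interior_Icc] at hx ⊢
      exact (hderiv x (Ioo_subset_Icc_self hx)).mono Ioo_subset_Icc_self
    · rw [interior_Icc] at hx
      linarith [hle x hx]
  have := hanti (left_mem_Icc.2 hac) (right_mem_Icc.2 hac) hac
  simp only at this
  linarith

theorem zlotnik_inequality_general
    (T : ℝ)
    (g : ℝ → ℝ)
    (y b y' b' : ℝ → ℝ) (y₀ : ℝ)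
    (hy : ∀ t ∈ Set.Icc (0 : ℝ) T, HasDerivWithinAt y (y' t) (Set.Icc (0 : ℝ) T) t)
    (hb : ∀ t ∈ Set.Icc (0 : ℝ) T, HasDerivWithinAt b (b' t) (Set.Icc (0 : ℝ) T) t)
    (hy0 : y 0 = y₀)
    (hode : ∀ t ∈ Set.Icc (0 : ℝ) T, y' t = g (y t) + b' t)
    (N₀ N₁ : ℝ) (hN₀ : 0 ≤ N₀)
    (hbgrowth : ∀ t₁ t₂ : ℝ, 0 ≤ t₁ → t₁ < t₂ → t₂ ≤ T →
      b t₂ - b t₁ ≤ N₀ + N₁ * (t₂ - t₁))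
    (ξs : ℝ) (hξs : ∀ ξ : ℝ, ξs ≤ ξ → g ξ ≤ -N₁) :
    ∀ t ∈ Set.Icc (0 : ℝ) T, y t ≤ max y₀ ξs + N₀ := by
  intro t ⟨ht0, htT⟩
  by_contra! hyt
  have hsub {s : ℝ} (hs : 0 ≤ s) : Icc s t ⊆ Icc 0 T := Icc_subset_Icc hs htT
  have hycont : ContinuousOn y (Icc 0 t) := fun x hx =>
    ((hy x (hsub le_rfl hx)).mono (hsub le_rfl)).continuousWithinAt
  obtain ⟨s, ⟨hs0, hst⟩, hys, hbig⟩ :=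
    hycont.exists_le_forall_Ioc_lt ht0 (hy0.trans_le (le_max_left y₀ ξs))
  have hst' : s < t := hst.lt_of_ne fun h => by subst h; linarith
  have hslope : ∀ x ∈ Ioo s t, y' x ≤ b' x - N₁ := fun x hx => by
    have hgx := hξs (y x) ((le_max_right y₀ ξs).trans (hbig x ⟨hx.1, hx.2.le⟩).le)
    rw [hode x (hsub hs0 (Ioo_subset_Icc_self hx))]
    linarith
  have hincr := sub_le_sub_sub_mul_of_hasDerivWithinAt_le hst
    (fun x hx => (hy x (hsub hs0 hx)).mono (hsub hs0))
    (fun x hx => (hb x (hsub hs0 hx)).mono (hsub hs0)) hslope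
  linarith [hbgrowth s t hs0 hst' htT]

/-- **Zlotnik's inequality** (Lemma 2.8). Let `T > 0`, `g : ℝ → ℝ` continuous with
`g(x) → −∞` as `x → ∞`, and `y, b` differentiable on `[0,T]` with `y 0 = y₀` and
`y' t = g (y t) + b' t` on `[0,T]`. If `b t₂ - b t₁ ≤ N₀ + N₁ (t₂ - t₁)` for all
`0 ≤ t₁ < t₂ ≤ T` with `N₀, N₁ ≥ 0`, and `g ξ ≤ -N₁` for all `ξ ≥ ξ*`, then
`y t ≤ max y₀ ξ* + N₀` on `[0,T]`. -/
theorem zlotnik_inequality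
    (T : ℝ) (hT : 0 < T)
    (g : ℝ → ℝ) (hg : Continuous g)
    (hg_top : Filter.Tendsto g Filter.atTop Filter.atBot)
    (y b y' b' : ℝ → ℝ) (y₀ : ℝ)
    (hy : ∀ t ∈ Set.Icc (0 : ℝ) T, HasDerivWithinAt y (y' t) (Set.Icc (0 : ℝ) T) t)
    (hb : ∀ t ∈ Set.Icc (0 : ℝ) T, HasDerivWithinAt b (b' t) (Set.Icc (0 : ℝ) T) t)
    (hy0 : y 0 = y₀)
    (hode : ∀ t ∈ Set.Icc (0 : ℝ) T, y' t = g (y t) + b' t)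
    (N₀ N₁ : ℝ) (hN₀ : 0 ≤ N₀) (hN₁ : 0 ≤ N₁)
    (hbgrowth : ∀ t₁ t₂ : ℝ, 0 ≤ t₁ → t₁ < t₂ → t₂ ≤ T →
      b t₂ - b t₁ ≤ N₀ + N₁ * (t₂ - t₁))
    (ξs : ℝ) (hξs : ∀ ξ : ℝ, ξs ≤ ξ → g ξ ≤ -N₁) :
    ∀ t ∈ Set.Icc (0 : ℝ) T, y t ≤ max y₀ ξs + N₀ :=
  zlotnik_inequality_general T g y b y' b' y₀ hy hb hy0 hode N₀ N₁ hN₀ hbgrowth ξs hξs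
end

section
/- Let A > 0, γ > 1, 0 < ρ̲ ≤ ρ̄ and M ≥ ρ̄. Define G(ρ, ρ_s) = (A/(γ−1)) · ρ · (ρ^{γ−1} − ρ_s^{γ−1}) + A ρ_s^{γ−1} (ρ_s − ρ). Then there exists a constant C > 0, depending only on A, γ, ρ̲, ρ̄ and M, such that for all ρ_s ∈ [ρ̲, ρ̄] and all ρ ∈ [0, M], C^{−1} (ρ − ρ_s)² ≤ G(ρ, ρ_s) ≤ C (ρ − ρ_s)². -/
/-!
`G(ρ, ρs)` is `A/(γ-1)` times the Bregman divergence of `x ↦ x^γ`, which equals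
`Aγ/(γ-1) ∫_{ρs}^{ρ} (t^{γ-1} - ρs^{γ-1}) dt`, so it suffices that the integrand is comparable to
`t - ρs`.
Bernoulli's inequality for `(a/b)^p` puts `b^p - a^p` between `min 1 p * b^(p-1) * (b - a)` and
`max 1 p * b^(p-1) * (b - a)` whenever `0 ≤ a ≤ b`. Along the integral the larger of `t` and `ρs`
stays in `[ρ̲, M]`, away from `0`, so `b^(p-1)` is bounded above and below there.
-/

open Real Set intervalIntegral
open MeasureTheory (volume)

lemma one_sub_rpow_mem_Icc {r p : ℝ} (hp : 0 < p) (hr₀ : 0 ≤ r) (hr₁ : r ≤ 1) :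
    1 - r ^ p ∈ Icc (min 1 p * (1 - r)) (max 1 p * (1 - r)) := by
  have hs : -1 ≤ r - 1 := by linarith
  have hr : 1 + (r - 1) = r := by ring
  rcases le_total 1 p with h1p | hp1
  · have hbern := one_add_mul_self_le_rpow_one_add hs h1p
    rw [hr] at hbern
    rw [min_eq_left h1p, max_eq_right h1p]
    constructor <;> nlinarith [rpow_le_self_of_le_one hr₀ hr₁ h1p]
  · have hbern := rpow_one_add_le_one_add_mul_self hs hp.le hp1
    rw [hr] at hbern
    rw [min_eq_right hp1, max_eq_left hp1]
    constructor <;> nlinarith [self_le_rpow_of_le_one hr₀ hr₁ hp1]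

lemma rpow_sub_rpow_mem_Icc {a b p : ℝ} (hp : 0 < p) (ha : 0 ≤ a) (hab : a ≤ b) (hb : 0 < b) :
    b ^ p - a ^ p ∈
      Icc (min 1 p * b ^ (p - 1) * (b - a)) (max 1 p * b ^ (p - 1) * (b - a)) := by
  have hbp : 0 < b ^ p := rpow_pos_of_pos hb p
  have hdiff : b ^ p - a ^ p = b ^ p * (1 - (a / b) ^ p) := by
    rw [div_rpow ha hb.le]; field_simp
  have hslope : ∀ c, c * b ^ (p - 1) * (b - a) = b ^ p * (c * (1 - a / b)) := by
    intro c; rw [rpow_sub_one hb.ne']; field_simp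
  obtain ⟨hlow, hupp⟩ :=
    one_sub_rpow_mem_Icc hp (div_nonneg ha hb.le) ((div_le_one hb).2 hab)
  rw [hdiff, hslope, hslope]
  exact ⟨mul_le_mul_of_nonneg_left hlow hbp.le, mul_le_mul_of_nonneg_left hupp hbp.le⟩

lemma rpow_mem_uIcc_of_mem_Icc {x L M : ℝ} (q : ℝ) (hL : 0 < L) (hx : x ∈ Icc L M) :
    x ^ q ∈ uIcc (L ^ q) (M ^ q) := by
  have hx₀ : 0 < x := hL.trans_le hx.1
  rcases le_total 0 q with hq | hq
  · exact Icc_subset_uIcc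
      ⟨rpow_le_rpow hL.le hx.1 hq, rpow_le_rpow hx₀.le hx.2 hq⟩
  · exact Icc_subset_uIcc'
      ⟨rpow_le_rpow_of_nonpos hx₀ hx.2 hq, rpow_le_rpow_of_nonpos hL hx.1 hq⟩

lemma sub_mul_rpow_sub_rpow_mem_Icc {a b p L M : ℝ} (hp : 0 < p) (hL : 0 < L)
    (ha : 0 ≤ a) (hb : 0 ≤ b) (hmax : max a b ∈ Icc L M) :
    (b - a) * (b ^ p - a ^ p) ∈
      Icc (min 1 p * min (L ^ (p - 1)) (M ^ (p - 1)) * (b - a) ^ 2)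
        (max 1 p * max (L ^ (p - 1)) (M ^ (p - 1)) * (b - a) ^ 2) := by
  wlog hab : a ≤ b generalizing a b
  · have h := this hb ha (max_comm a b ▸ hmax) (le_of_not_ge hab)
    rwa [show (a - b) * (a ^ p - b ^ p) = (b - a) * (b ^ p - a ^ p) by ring,
      show (a - b) ^ 2 = (b - a) ^ 2 by ring] at h
  rw [max_eq_right hab] at hmax
  obtain ⟨hlow, hupp⟩ := rpow_sub_rpow_mem_Icc hp ha hab (hL.trans_le hmax.1)
  obtain ⟨hmin, hmax'⟩ := rpow_mem_uIcc_of_mem_Icc (p - 1) hL hmax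
  constructor
  · calc min 1 p * min (L ^ (p - 1)) (M ^ (p - 1)) * (b - a) ^ 2
        ≤ min 1 p * b ^ (p - 1) * (b - a) ^ 2 := by gcongr
      _ = (b - a) * (min 1 p * b ^ (p - 1) * (b - a)) := by ring
      _ ≤ (b - a) * (b ^ p - a ^ p) := by gcongr
  · calc (b - a) * (b ^ p - a ^ p)
        ≤ (b - a) * (max 1 p * b ^ (p - 1) * (b - a)) := by gcongr
      _ = max 1 p * b ^ (p - 1) * (b - a) ^ 2 := by ring
      _ ≤ max 1 p * max (L ^ (p - 1)) (M ^ (p - 1)) * (b - a) ^ 2 := by gcongr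

lemma integral_mul_sub (c a b s : ℝ) :
    ∫ t in a..b, c * (t - s) = c * ((b - s) ^ 2 - (a - s) ^ 2) / 2 := by
  rw [integral_const_mul, integral_comp_sub_right (fun t => t), integral_id]
  ring

lemma mul_sq_div_two_le_integral {f : ℝ → ℝ} {s ρ c : ℝ}
    (hf : IntervalIntegrable f volume s ρ)
    (h : ∀ t ∈ uIoo s ρ, c * (t - s) ^ 2 ≤ (t - s) * f t) :
    c * (ρ - s) ^ 2 / 2 ≤ ∫ t in s..ρ, f t := by
  have hlin : ∀ a b, IntervalIntegrable (fun t => c * (t - s)) volume a b := fun a b =>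
    (by fun_prop : Continuous fun t => c * (t - s)).intervalIntegrable a b
  rcases le_total s ρ with hsρ | hρs
  · calc c * (ρ - s) ^ 2 / 2 = ∫ t in s..ρ, c * (t - s) := by rw [integral_mul_sub]; ring
      _ ≤ ∫ t in s..ρ, f t := by
        refine integral_mono_on_of_le_Ioo hsρ (hlin s ρ) hf fun t ht => ?_
        have ht' := h t (uIoo_of_le hsρ ▸ ht)
        have : 0 < t - s := sub_pos.2 ht.1
        nlinarith
  · calc c * (ρ - s) ^ 2 / 2 = -∫ t in ρ..s, c * (t - s) := by rw [integral_mul_sub]; ring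
      _ ≤ -∫ t in ρ..s, f t := by
        refine neg_le_neg (integral_mono_on_of_le_Ioo hρs hf.symm (hlin ρ s) fun t ht => ?_)
        have ht' := h t (uIoo_of_ge hρs ▸ ht)
        have : t - s < 0 := sub_neg.2 ht.2
        nlinarith
      _ = ∫ t in s..ρ, f t := (integral_symm ρ s).symm

lemma integral_le_mul_sq_div_two {f : ℝ → ℝ} {s ρ c : ℝ}
    (hf : IntervalIntegrable f volume s ρ)
    (h : ∀ t ∈ uIoo s ρ, (t - s) * f t ≤ c * (t - s) ^ 2) :
    ∫ t in s..ρ, f t ≤ c * (ρ - s) ^ 2 / 2 := by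
  have := mul_sq_div_two_le_integral (f := fun t => -f t) (c := -c) hf.neg fun t ht => by
    simpa only [mul_neg, neg_mul, neg_le_neg_iff] using h t ht
  rw [integral_neg] at this
  linarith

noncomputable def potentialEnergyDensity (A γ ρ ρs : ℝ) : ℝ :=
  A / (γ - 1) * ρ * (ρ ^ (γ - 1) - ρs ^ (γ - 1)) + A * ρs ^ (γ - 1) * (ρs - ρ)

lemma potentialEnergyDensity_eq_integral {A γ ρ ρs : ℝ} (hγ₀ : 0 < γ) (hγ₁ : γ ≠ 1)
    (hρ : 0 ≤ ρ) (hρs : 0 ≤ ρs) :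
    potentialEnergyDensity A γ ρ ρs =
      A * γ / (γ - 1) * ∫ t in ρs..ρ, (t ^ (γ - 1) - ρs ^ (γ - 1)) := by
  have hpow : ∀ x : ℝ, 0 ≤ x → x ^ γ = x ^ (γ - 1) * x := fun x hx => by
    simpa using rpow_add_one' hx (y := γ - 1) (by simpa using hγ₀.ne')
  rw [integral_sub (intervalIntegrable_rpow' (by linarith)) intervalIntegrable_const,
    integral_rpow (Or.inl (by linarith)), integral_const, smul_eq_mul, sub_add_cancel,
    hpow ρ hρ, hpow ρs hρs, potentialEnergyDensity]
  have : γ - 1 ≠ 0 := sub_ne_zero.2 hγ₁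
  field_simp
  ring

lemma exists_pos_inv_le_and_le {k₁ : ℝ} (hk₁ : 0 < k₁) (k₂ : ℝ) :
    ∃ C : ℝ, 0 < C ∧ C⁻¹ ≤ k₁ ∧ k₂ ≤ C :=
  ⟨max k₂ k₁⁻¹, (inv_pos.2 hk₁).trans_le (le_max_right _ _),
    inv_le_of_inv_le₀ hk₁ (le_max_right _ _), le_max_left _ _⟩

/-- Inequality (1.14): the potential energy density
`G(ρ, ρ_s) = (A/(γ−1)) ρ (ρ^{γ−1} − ρ_s^{γ−1}) + A ρ_s^{γ−1} (ρ_s − ρ)`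
is comparable to `(ρ − ρ_s)²`, uniformly for `ρ_s ∈ [ρ̲, ρ̄]` and `ρ ∈ [0, M]`,
with a constant depending only on `A, γ, ρ̲, ρ̄, M`. -/
theorem potential_energy_density_comparable
    (A γ ρlow ρbar M : ℝ) (hA : 0 < A) (hγ : 1 < γ)
    (hρlow : 0 < ρlow) (hle : ρlow ≤ ρbar) (hM : ρbar ≤ M) :
    ∃ C : ℝ, 0 < C ∧
      ∀ ρs ∈ Set.Icc ρlow ρbar, ∀ ρ ∈ Set.Icc (0 : ℝ) M,
        C⁻¹ * (ρ - ρs) ^ 2 ≤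
            A / (γ - 1) * ρ * (ρ ^ (γ - 1) - ρs ^ (γ - 1)) + A * ρs ^ (γ - 1) * (ρs - ρ) ∧
          A / (γ - 1) * ρ * (ρ ^ (γ - 1) - ρs ^ (γ - 1)) + A * ρs ^ (γ - 1) * (ρs - ρ) ≤
            C * (ρ - ρs) ^ 2 := by
  have hp : 0 < γ - 1 := sub_pos.2 hγ
  set c₁ := min 1 (γ - 1) * min (ρlow ^ (γ - 1 - 1)) (M ^ (γ - 1 - 1))
  set c₂ := max 1 (γ - 1) * max (ρlow ^ (γ - 1 - 1)) (M ^ (γ - 1 - 1))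
  set κ := A * γ / (γ - 1)
  have hM₀ : 0 < M := hρlow.trans_le (hle.trans hM)
  obtain ⟨C, hC, hC₁, hC₂⟩ :=
    exists_pos_inv_le_and_le (k₁ := κ * c₁ / 2) (by positivity) (κ * c₂ / 2)
  refine ⟨C, hC, fun ρs hρs ρ hρ => ?_⟩
  have hρs₀ : 0 < ρs := hρlow.trans_le hρs.1
  have hslope : ∀ t ∈ uIoo ρs ρ,
      (t - ρs) * (t ^ (γ - 1) - ρs ^ (γ - 1)) ∈ Icc (c₁ * (t - ρs) ^ 2) (c₂ * (t - ρs) ^ 2) :=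
    fun t ht => sub_mul_rpow_sub_rpow_mem_Icc hp hρlow hρs₀.le
      ((le_inf hρs₀.le hρ.1).trans ht.1.le)
      ⟨le_max_of_le_left hρs.1,
        max_le (hρs.2.trans hM) (ht.2.le.trans (sup_le (hρs.2.trans hM) hρ.2))⟩
  have hint : IntervalIntegrable (fun t => t ^ (γ - 1) - ρs ^ (γ - 1)) volume ρs ρ :=
    (intervalIntegrable_rpow' (by linarith)).sub intervalIntegrable_const
  have hlow := mul_sq_div_two_le_integral hint fun t ht => (hslope t ht).1
  have hupp := integral_le_mul_sq_div_two hint fun t ht => (hslope t ht).2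
  change C⁻¹ * _ ≤ potentialEnergyDensity A γ ρ ρs ∧ potentialEnergyDensity A γ ρ ρs ≤ _
  rw [potentialEnergyDensity_eq_integral (by linarith) hγ.ne' hρ.1 hρs₀.le]
  constructor
  · calc C⁻¹ * (ρ - ρs) ^ 2 ≤ κ * c₁ / 2 * (ρ - ρs) ^ 2 := by gcongr
      _ = κ * (c₁ * (ρ - ρs) ^ 2 / 2) := by ring
      _ ≤ _ := by gcongr
  · calc κ * _ ≤ κ * (c₂ * (ρ - ρs) ^ 2 / 2) := by gcongr
      _ = κ * c₂ / 2 * (ρ - ρs) ^ 2 := by ring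
      _ ≤ C * (ρ - ρs) ^ 2 := by gcongr
end

section
/- Let U ⊆ ℝ³ × ℝ be open, let ρ : U → ℝ, u : U → ℝ³ and H : U → ℝ³ be continuously differentiable (with u twice continuously differentiable in the spatial variables), let ρ_s : ℝ³ → ℝ be differentiable, and suppose ρ > 0 and ∂_t ρ + div(ρ u) = 0 pointwise on U, where div is the spatial divergence. Let μ > 0, λ ∈ ℝ, A > 0, γ > 1, and set P = A ρ^γ, P̃(x) = A ρ_s(x)^γ, F = (2μ + λ) div u − (P − P̃) − (1/2)|H|², and u̇ = ∂_t u + (u·∇)u. Then on U, ∂_t F = (2μ + λ) div u̇ − (2μ + λ) Σ_{i,j=1}^{3} ∂_i u^j ∂_j u^i − u·∇F + γ P div u + u·∇P̃ − (1/2) u·∇|H|² − H·∂_t H. -/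
/-! Write `ḟ = f_t + u·∇f` for the material derivative, so that the claim reads
`Ḟ = (2μ+λ)(div u̇ − ∂_i u^j ∂_j u^i) + γ P div u + u·∇P̃ − ½ u·∇|H|² − H·H_t`.
Since `Ḟ` is linear in `F`, this follows from four facts: `div u̇ = (div u)˙ + ∂_i u^j ∂_j u^i`
(commute `∂_i` past the material derivative, using the symmetry of second derivatives of `u`);
`Ṗ = γAρ^{γ-1} ρ̇ = −γ P div u` by the continuity equation `ρ̇ = −ρ div u`; `∂_t P̃ = 0`;
and `∂_t |H|² = 2 H·H_t`. -/

/-- Spatial partial derivative `∂_i f` of a function on space-time `ℝ³ × ℝ`. -/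
noncomputable def spacePartial (i : Fin 3) (f : ((Fin 3 → ℝ) × ℝ) → ℝ)
    (p : (Fin 3 → ℝ) × ℝ) : ℝ :=
  fderiv ℝ f p (Pi.single i 1, 0)

/-- Time partial derivative `∂_t f` of a function on space-time `ℝ³ × ℝ`. -/
noncomputable def timePartial (f : ((Fin 3 → ℝ) × ℝ) → ℝ)
    (p : (Fin 3 → ℝ) × ℝ) : ℝ :=
  fderiv ℝ f p (0, 1)

section Calculus

variable {E F : Type*} [NormedAddCommGroup E] [NormedSpace ℝ E]
  [NormedAddCommGroup F] [NormedSpace ℝ F]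

theorem ContDiffAt.differentiableAt_fderiv_apply {f : E → F} {x : E} (hf : ContDiffAt ℝ 2 f x)
    (v : E) : DifferentiableAt ℝ (fun y => fderiv ℝ f y v) x :=
  ((hf.fderiv_right (by norm_num)).differentiableAt one_ne_zero).clm_apply
    (differentiableAt_const v)

theorem fderiv_fderiv_apply_vectorField {f : E → F} {W : E → E} {x : E}
    (hf : ContDiffAt ℝ 2 f x) (hW : DifferentiableAt ℝ W x) (v : E) :
    fderiv ℝ (fun y => fderiv ℝ f y (W y)) x v =
      fderiv ℝ (fun y => fderiv ℝ f y v) x (W x) + fderiv ℝ f x (fderiv ℝ W x v) := by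
  have hDf : DifferentiableAt ℝ (fderiv ℝ f) x :=
    (hf.fderiv_right (by norm_num)).differentiableAt one_ne_zero
  have hsymm := hf.isSymmSndFDerivAt (by simp [minSmoothness_of_isRCLikeNormedField])
  rw [fderiv_clm_apply hDf hW, fderiv_clm_apply hDf (differentiableAt_const v)]
  simp [hsymm v (W x), add_comm]

theorem fderiv_const_mul_rpow_const {ρ : E → ℝ} {x : E} (hρ : DifferentiableAt ℝ ρ x)
    (hρ0 : ρ x ≠ 0) (A γ : ℝ) (v : E) :
    fderiv ℝ (fun y => A * ρ y ^ γ) x v = A * γ * ρ x ^ (γ - 1) * fderiv ℝ ρ x v := by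
  rw [((hρ.hasFDerivAt.rpow_const (Or.inl hρ0)).const_mul A).fderiv]
  simp [mul_assoc]

theorem fderiv_sum_sq {ι : Type*} [Fintype ι] {H : E → ι → ℝ} {x : E}
    (hH : ∀ k, DifferentiableAt ℝ (fun y => H y k) x) (v : E) :
    fderiv ℝ (fun y => ∑ k, H y k ^ 2) x v = 2 * ∑ k, H x k * fderiv ℝ (fun y => H y k) x v := by
  rw [(HasFDerivAt.fun_sum fun k _ => (hH k).hasFDerivAt.pow 2).fderiv]
  simp [Finset.mul_sum, mul_assoc, mul_left_comm]

end Calculus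

section SpaceTime

/-- The material derivative `f_t + u · ∇f`, written as the derivative along `(u, 1)`. -/
noncomputable def materialDeriv (u : ((Fin 3 → ℝ) × ℝ) → (Fin 3 → ℝ))
    (f : ((Fin 3 → ℝ) × ℝ) → ℝ) (p : (Fin 3 → ℝ) × ℝ) : ℝ :=
  fderiv ℝ f p (u p, 1)

theorem sum_mul_spacePartial (f : ((Fin 3 → ℝ) × ℝ) → ℝ) (p : (Fin 3 → ℝ) × ℝ)
    (a : Fin 3 → ℝ) : ∑ i, a i * spacePartial i f p = fderiv ℝ f p (a, 0) := by
  have ha : (a, (0 : ℝ)) = ∑ i, a i • ((Pi.single i 1 : Fin 3 → ℝ), (0 : ℝ)) := by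
    ext j <;> simp [Prod.fst_sum, Prod.snd_sum, Finset.sum_apply, Pi.single_apply]
  simp only [ha, map_sum, map_smul, smul_eq_mul, spacePartial]

theorem timePartial_add_sum_mul_spacePartial (u : ((Fin 3 → ℝ) × ℝ) → (Fin 3 → ℝ))
    (f : ((Fin 3 → ℝ) × ℝ) → ℝ) (p : (Fin 3 → ℝ) × ℝ) :
    timePartial f p + ∑ i, u p i * spacePartial i f p = materialDeriv u f p := by
  rw [sum_mul_spacePartial, timePartial, materialDeriv, ← map_add]
  simp

theorem timePartial_comp_fst {g : (Fin 3 → ℝ) → ℝ} {p : (Fin 3 → ℝ) × ℝ}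
    (hg : DifferentiableAt ℝ g p.1) : timePartial (fun q => g q.1) p = 0 := by
  change fderiv ℝ (g ∘ Prod.fst) p (0, 1) = 0
  simp [(hg.hasFDerivAt.comp p hasFDerivAt_fst).fderiv]

theorem spacePartial_mul {f g : ((Fin 3 → ℝ) × ℝ) → ℝ} {p : (Fin 3 → ℝ) × ℝ}
    (hf : DifferentiableAt ℝ f p) (hg : DifferentiableAt ℝ g p) (i : Fin 3) :
    spacePartial i (fun q => f q * g q) p = f p * spacePartial i g p + g p * spacePartial i f p := by
  simp [spacePartial, fderiv_fun_mul hf hg]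

end SpaceTime

section Kinematics

variable {u : ((Fin 3 → ℝ) × ℝ) → (Fin 3 → ℝ)} {p : (Fin 3 → ℝ) × ℝ}

theorem materialDeriv_of_continuity {ρ : ((Fin 3 → ℝ) × ℝ) → ℝ} (hρ : DifferentiableAt ℝ ρ p)
    (hu : ∀ i, DifferentiableAt ℝ (fun q => u q i) p)
    (hcont : timePartial ρ p + ∑ i, spacePartial i (fun q => ρ q * u q i) p = 0) :
    materialDeriv u ρ p = -(ρ p * ∑ i, spacePartial i (fun q => u q i) p) := by
  simp only [spacePartial_mul hρ (hu _), Finset.sum_add_distrib, ← Finset.mul_sum] at hcont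
  rw [← timePartial_add_sum_mul_spacePartial]
  linarith

theorem materialDeriv_pressure_of_continuity {ρ : ((Fin 3 → ℝ) × ℝ) → ℝ}
    (hρ : DifferentiableAt ℝ ρ p) (hρ0 : ρ p ≠ 0)
    (hu : ∀ i, DifferentiableAt ℝ (fun q => u q i) p)
    (hcont : timePartial ρ p + ∑ i, spacePartial i (fun q => ρ q * u q i) p = 0) (A γ : ℝ) :
    materialDeriv u (fun q => A * ρ q ^ γ) p =
      -(γ * (A * ρ p ^ γ) * ∑ i, spacePartial i (fun q => u q i) p) := by
  rw [materialDeriv, fderiv_const_mul_rpow_const hρ hρ0, ← materialDeriv,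
    materialDeriv_of_continuity hρ hu hcont, Real.rpow_sub_one hρ0]
  field_simp

theorem spacePartial_materialDeriv {f : ((Fin 3 → ℝ) × ℝ) → ℝ} (hf : ContDiffAt ℝ 2 f p)
    (hu : DifferentiableAt ℝ u p) (i : Fin 3) :
    spacePartial i (materialDeriv u f) p =
      materialDeriv u (spacePartial i f) p +
        ∑ j, spacePartial i (fun r => u r j) p * spacePartial j f p := by
  have hW : DifferentiableAt ℝ (fun q => (u q, (1 : ℝ))) p := hu.prodMk (differentiableAt_const 1)
  have hu_i : ∀ j, spacePartial i (fun r => u r j) p = fderiv ℝ u p (Pi.single i 1, 0) j := by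
    intro j
    simp [spacePartial, fderiv_apply hu j]
  change fderiv ℝ (fun q => fderiv ℝ f q (u q, 1)) p _ = fderiv ℝ (spacePartial i f) p (u p, 1) + _
  rw [fderiv_fderiv_apply_vectorField hf hW, hu.fderiv_prodMk (differentiableAt_const 1)]
  simp only [hu_i, sum_mul_spacePartial, ContinuousLinearMap.prod_apply, fderiv_const_apply,
    zero_apply]
  rfl

theorem sum_spacePartial_materialDeriv (hu : ContDiffAt ℝ 2 u p) :
    ∑ k, spacePartial k (materialDeriv u (fun r => u r k)) p =
      materialDeriv u (fun q => ∑ i, spacePartial i (fun r => u r i) q) p +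
        ∑ i, ∑ j, spacePartial i (fun r => u r j) p * spacePartial j (fun r => u r i) p := by
  have hcomp : ∀ k, ContDiffAt ℝ 2 (fun r => u r k) p := contDiffAt_pi.mp hu
  simp only [spacePartial_materialDeriv (hcomp _) (hu.differentiableAt two_ne_zero),
    Finset.sum_add_distrib]
  congr 1
  rw [materialDeriv, fderiv_fun_sum (A := fun i => spacePartial i (fun r => u r i))
    fun i _ => (hcomp i).differentiableAt_fderiv_apply _]
  simp [materialDeriv]

end Kinematics

theorem effective_viscous_flux_time_derivative_general
    (U : Set ((Fin 3 → ℝ) × ℝ)) (hU : IsOpen U)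
    (ρ : ((Fin 3 → ℝ) × ℝ) → ℝ)
    (u H : ((Fin 3 → ℝ) × ℝ) → (Fin 3 → ℝ))
    (ρs : (Fin 3 → ℝ) → ℝ)
    (hρ : ContDiffOn ℝ 1 ρ U) (hu : ContDiffOn ℝ 2 u U) (hH : ContDiffOn ℝ 1 H U)
    (hρs : Differentiable ℝ ρs)
    (hρpos : ∀ p ∈ U, 0 < ρ p)
    (hcontinuity : ∀ p ∈ U,
      timePartial ρ p + ∑ i : Fin 3, spacePartial i (fun q => ρ q * u q i) p = 0)
    (μ lam A γ : ℝ) (hγ : 1 < γ)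
    (P Ptil F : ((Fin 3 → ℝ) × ℝ) → ℝ)
    (udot : ((Fin 3 → ℝ) × ℝ) → (Fin 3 → ℝ))
    (hP : ∀ q, P q = A * ρ q ^ γ)
    (hPtil : ∀ q, Ptil q = A * ρs q.1 ^ γ)
    (hF : ∀ q, F q = (2 * μ + lam) * (∑ i : Fin 3, spacePartial i (fun r => u r i) q)
        - (P q - Ptil q) - (1 / 2) * ∑ k : Fin 3, (H q k) ^ 2)
    (hudot : ∀ q, ∀ k : Fin 3, udot q k =
        timePartial (fun r => u r k) q
          + ∑ i : Fin 3, u q i * spacePartial i (fun r => u r k) q) :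
    ∀ p ∈ U,
      timePartial F p =
        (2 * μ + lam) * (∑ k : Fin 3, spacePartial k (fun q => udot q k) p)
          - (2 * μ + lam) *
              (∑ i : Fin 3, ∑ j : Fin 3,
                spacePartial i (fun r => u r j) p * spacePartial j (fun r => u r i) p)
          - (∑ i : Fin 3, u p i * spacePartial i F p)
          + γ * P p * (∑ i : Fin 3, spacePartial i (fun r => u r i) p)
          + (∑ i : Fin 3, u p i * spacePartial i Ptil p)
          - (1 / 2) *
              (∑ i : Fin 3,
                u p i * spacePartial i (fun q => ∑ k : Fin 3, (H q k) ^ 2) p)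
          - ∑ k : Fin 3, H p k * timePartial (fun q => H q k) p := by
  intro p hp
  have hpU : U ∈ nhds p := hU.mem_nhds hp
  have hu2 : ContDiffAt ℝ 2 u p := hu.contDiffAt hpU
  have hρd : DifferentiableAt ℝ ρ p := (hρ.contDiffAt hpU).differentiableAt one_ne_zero
  have hud : ∀ i, DifferentiableAt ℝ (fun q => u q i) p := fun i =>
    (contDiffAt_pi.mp hu2 i).differentiableAt two_ne_zero
  have hHd : ∀ k, DifferentiableAt ℝ (fun q => H q k) p := fun k =>
    (contDiffAt_pi.mp (hH.contDiffAt hpU) k).differentiableAt one_ne_zero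
  set divu := fun q => ∑ i : Fin 3, spacePartial i (fun r => u r i) q
  have hdivd : DifferentiableAt ℝ divu p :=
    DifferentiableAt.fun_sum fun i _ => (contDiffAt_pi.mp hu2 i).differentiableAt_fderiv_apply _
  set H2 := fun q => ∑ k : Fin 3, H q k ^ 2
  have hH2d : DifferentiableAt ℝ H2 p := DifferentiableAt.fun_sum fun k _ => (hHd k).pow 2
  have hPd : DifferentiableAt ℝ P p :=
    funext hP ▸ (hρd.rpow_const (Or.inl (hρpos p hp).ne')).const_mul A
  have hρsA : DifferentiableAt ℝ (fun x => A * ρs x ^ γ) p.1 :=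
    ((hρs p.1).rpow_const (Or.inr hγ.le)).const_mul A
  have hPtd : DifferentiableAt ℝ Ptil p := funext hPtil ▸ hρsA.comp p differentiableAt_fst
  have hF_deriv : HasFDerivAt F ((2 * μ + lam) • fderiv ℝ divu p
      - (fderiv ℝ P p - fderiv ℝ Ptil p) - (1 / 2 : ℝ) • fderiv ℝ H2 p) p :=
    funext hF ▸ ((hdivd.hasFDerivAt.const_mul _).sub (hPd.hasFDerivAt.sub hPtd.hasFDerivAt)).sub
      (hH2d.hasFDerivAt.const_mul _)
  have hF_material : materialDeriv u F p = (2 * μ + lam) * materialDeriv u divu p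
      - (materialDeriv u P p - materialDeriv u Ptil p) - 1 / 2 * materialDeriv u H2 p := by
    simp [materialDeriv, hF_deriv.fderiv]
  have hudot_material : udot = fun q k => materialDeriv u (fun r => u r k) q := by
    funext q k
    rw [hudot, timePartial_add_sum_mul_spacePartial]
  have hdiv_udot := sum_spacePartial_materialDeriv hu2
  have hP_material : materialDeriv u P p = -(γ * P p * divu p) :=
    funext hP ▸ materialDeriv_pressure_of_continuity hρd (hρpos p hp).ne' hud (hcontinuity p hp) A γ
  have hPtil_time : timePartial Ptil p = 0 := funext hPtil ▸ timePartial_comp_fst hρsA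
  have hH2_time : timePartial H2 p = 2 * ∑ k, H p k * timePartial (fun q => H q k) p :=
    fderiv_sum_sq hHd _
  rw [hudot_material]
  linear_combination timePartial_add_sum_mul_spacePartial u F p + hF_material
    - (2 * μ + lam) * hdiv_udot - hP_material - timePartial_add_sum_mul_spacePartial u Ptil p
    + hPtil_time + 1 / 2 * timePartial_add_sum_mul_spacePartial u H2 p - 1 / 2 * hH2_time

/-- The identity for the time derivative of the effective viscous flux
`F = (2μ+λ) div u − (P − P̃) − |H|²/2` (see the computation after (3.35)):
`F_t = (2μ+λ) div u̇ − (2μ+λ) ∂_i u^j ∂_j u^i − u·∇F + γ P div u + u·∇P̃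
       − (1/2) u·∇|H|² − H·H_t`. -/
theorem effective_viscous_flux_time_derivative
    (U : Set ((Fin 3 → ℝ) × ℝ)) (hU : IsOpen U)
    (ρ : ((Fin 3 → ℝ) × ℝ) → ℝ)
    (u H : ((Fin 3 → ℝ) × ℝ) → (Fin 3 → ℝ))
    (ρs : (Fin 3 → ℝ) → ℝ)
    (hρ : ContDiffOn ℝ 1 ρ U) (hu : ContDiffOn ℝ 2 u U) (hH : ContDiffOn ℝ 1 H U)
    (hρs : Differentiable ℝ ρs)
    (hρpos : ∀ p ∈ U, 0 < ρ p)
    (hcontinuity : ∀ p ∈ U,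
      timePartial ρ p + ∑ i : Fin 3, spacePartial i (fun q => ρ q * u q i) p = 0)
    (μ lam A γ : ℝ) (hμ : 0 < μ) (hA : 0 < A) (hγ : 1 < γ)
    (P Ptil F : ((Fin 3 → ℝ) × ℝ) → ℝ)
    (udot : ((Fin 3 → ℝ) × ℝ) → (Fin 3 → ℝ))
    (hP : ∀ q, P q = A * ρ q ^ γ)
    (hPtil : ∀ q, Ptil q = A * ρs q.1 ^ γ)
    (hF : ∀ q, F q = (2 * μ + lam) * (∑ i : Fin 3, spacePartial i (fun r => u r i) q)
        - (P q - Ptil q) - (1 / 2) * ∑ k : Fin 3, (H q k) ^ 2)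
    (hudot : ∀ q, ∀ k : Fin 3, udot q k =
        timePartial (fun r => u r k) q
          + ∑ i : Fin 3, u q i * spacePartial i (fun r => u r k) q) :
    ∀ p ∈ U,
      timePartial F p =
        (2 * μ + lam) * (∑ k : Fin 3, spacePartial k (fun q => udot q k) p)
          - (2 * μ + lam) *
              (∑ i : Fin 3, ∑ j : Fin 3,
                spacePartial i (fun r => u r j) p * spacePartial j (fun r => u r i) p)
          - (∑ i : Fin 3, u p i * spacePartial i F p)
          + γ * P p * (∑ i : Fin 3, spacePartial i (fun r => u r i) p)
          + (∑ i : Fin 3, u p i * spacePartial i Ptil p)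
          - (1 / 2) *
              (∑ i : Fin 3,
                u p i * spacePartial i (fun q => ∑ k : Fin 3, (H q k) ^ 2) p)
          - ∑ k : Fin 3, H p k * timePartial (fun q => H q k) p :=
  effective_viscous_flux_time_derivative_general U hU ρ u H ρs hρ hu hH hρs hρpos hcontinuity μ lam
    A γ hγ P Ptil F udot hP hPtil hF hudot
end

section
/- Let Ω ⊂ ℝ³ be a bounded measurable set and let θ > 0 be such that the Lebesgue measure of B_R(x) ∩ Ω is at least θ R³ for every x ∈ Ω and every 0 < R ≤ 1, where B_R(x) is the open ball of radius R centered at x. Let t₁ < t₂ with t₂ − t₁ ≤ 1, let K ≥ 0, and let u : Ω × [t₁, t₂] → ℝ³ be continuous, continuously differentiable in t with ∂_t u continuous and bounded on Ω × [t₁, t₂], and suppose: (i) |u(y, t) − u(z, t)| ≤ K |y − z|^{1/2} for all y, z ∈ Ω and all t ∈ [t₁, t₂]; (ii) ∫_{t₁}^{t₂} ∫_Ω |∂_t u(y, t)|² dy dt ≤ K². Then there exists a constant C depending only on θ such that |u(x, t₂) − u(x, t₁)| ≤ C K (t₂ − t₁)^{1/8} for every x ∈ Ω. -/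
/-!
Average over `A = B_R(x) ∩ Ω` with `R = (t₂ - t₁)^{1/4}`. By the first moment method some
`y ∈ A` has `∫ |∂ₜu(y, ·)|² ≤ K² / |A| ≤ K² / (θ R³)`, so by Cauchy–Schwarz in time
`|u(y, t₂) - u(y, t₁)| ≤ √(R⁴) · K / √(θ R³) = θ^{-1/2} K R^{1/2}`. The spatial Hölder bound moves
`x` to `y` at cost `K R^{1/2}` at both times, and `R^{1/2} = (t₂ - t₁)^{1/8}`.
-/

open MeasureTheory Set

lemma integral_le_sqrt_measureReal_mul_sqrt_integral_sq {α : Type*} [MeasurableSpace α]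
    {μ : Measure α} [IsFiniteMeasure μ] {g : α → ℝ} (hg0 : 0 ≤ᵐ[μ] g)
    (hg : AEStronglyMeasurable g μ) (hg2 : Integrable (fun x => g x ^ 2) μ) :
    ∫ x, g x ∂μ ≤ √(μ.real univ) * √(∫ x, g x ^ 2 ∂μ) := by
  have h := integral_mul_le_Lp_mul_Lq_of_nonneg Real.HolderConjugate.two_two hg0
    (ae_of_all _ fun _ => zero_le_one) (by simpa [memLp_two_iff_integrable_sq hg] using hg2)
    (memLp_const (1 : ℝ))
  rw [Real.sqrt_eq_rpow, Real.sqrt_eq_rpow]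
  simpa [Real.rpow_two, mul_comm] using h

lemma norm_sub_le_sqrt_mul_sqrt_integral_sq {E : Type*} [NormedAddCommGroup E]
    [NormedSpace ℝ E] [CompleteSpace E] {f f' : ℝ → E} {a b : ℝ} (hab : a ≤ b)
    (hf : ∀ t ∈ Icc a b, HasDerivWithinAt f (f' t) (Icc a b) t)
    (hf' : ContinuousOn f' (Icc a b)) :
    ‖f b - f a‖ ≤ √(b - a) * √(∫ t in a..b, ‖f' t‖ ^ 2) := by
  rw [← intervalIntegral.integral_eq_sub_of_hasDeriv_right_of_le hab
    (fun t ht => (hf t ht).continuousWithinAt)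
    (fun t ht => ((hf t (Ioo_subset_Icc_self ht)).hasDerivAt
      (Icc_mem_nhds ht.1 ht.2)).hasDerivWithinAt)
    (hf'.intervalIntegrable_of_Icc hab), intervalIntegral.integral_of_le hab,
    intervalIntegral.integral_of_le hab,
    ← Real.volume_real_Ioc_of_le hab, ← measureReal_restrict_apply_univ]
  have : IsFiniteMeasure (volume.restrict (Ioc a b)) :=
    isFiniteMeasure_restrict.2 measure_Ioc_lt_top.ne
  calc ‖∫ t in Ioc a b, f' t‖ ≤ ∫ t in Ioc a b, ‖f' t‖ := norm_integral_le_integral_norm _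
    _ ≤ _ := integral_le_sqrt_measureReal_mul_sqrt_integral_sq
      (ae_of_all _ fun _ => norm_nonneg _)
      ((hf'.mono Ioc_subset_Icc_self).norm.aestronglyMeasurable measurableSet_Ioc)
      ((hf'.norm.pow 2).integrableOn_Icc.mono_set Ioc_subset_Icc_self)

lemma integrable_prod_restrict_of_continuousOn {X Y E : Type*} [TopologicalSpace X]
    [MeasurableSpace X] [OpensMeasurableSpace X] [SecondCountableTopology X] [TopologicalSpace Y]
    [MeasurableSpace Y] [OpensMeasurableSpace Y] [SecondCountableTopology Y]
    [NormedAddCommGroup E] {μ : Measure X} {ν : Measure Y} [SFinite μ] [SFinite ν]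
    {f : X × Y → E} {s : Set X} {t : Set Y} {M : ℝ} (hf : ContinuousOn f (s ×ˢ t))
    (hs : MeasurableSet s) (ht : MeasurableSet t) (hμs : μ s ≠ ⊤) (hνt : ν t ≠ ⊤)
    (hM : ∀ p ∈ s ×ˢ t, ‖f p‖ ≤ M) :
    Integrable f ((μ.restrict s).prod (ν.restrict t)) := by
  rw [Measure.prod_restrict]
  refine ⟨hf.aestronglyMeasurable (hs.prod ht), .restrict_of_bounded (C := M) ?_
    ((ae_restrict_iff' (hs.prod ht)).2 (ae_of_all _ hM))⟩
  rw [Measure.prod_prod]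
  exact ENNReal.mul_lt_top hμs.lt_top hνt.lt_top

lemma exists_mem_integral_le_integral_integral_div {X Y : Type*} [MeasurableSpace X]
    [MeasurableSpace Y] {μ : Measure X} {ν : Measure Y} [SFinite ν] {F : X → Y → ℝ}
    {s t : Set X} (hF0 : ∀ x y, 0 ≤ F x y)
    (hF : Integrable (Function.uncurry F) ((μ.restrict t).prod ν))
    (hs : μ s ≠ 0) (hst : s ⊆ t) (ht : μ t ≠ ⊤) :
    ∃ x ∈ s, ∫ y, F x y ∂ν ≤ (∫ y, ∫ x in t, F x y ∂μ ∂ν) / μ.real s := by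
  have : IsFiniteMeasure (μ.restrict t) := isFiniteMeasure_restrict.2 ht
  have hG : IntegrableOn (fun x => ∫ y, F x y ∂ν) t μ := hF.integral_prod_left
  obtain ⟨x, hx, hle⟩ := exists_le_setAverage hs (measure_ne_top_of_subset hst ht)
    (hG.mono_set hst)
  refine ⟨x, hx, hle.trans ?_⟩
  rw [setAverage_eq, smul_eq_mul, inv_mul_eq_div, ← integral_integral_swap hF]
  exact div_le_div_of_nonneg_right (setIntegral_mono_set hG
    (ae_of_all _ fun _ => integral_nonneg (hF0 _)) hst.eventuallyLE) measureReal_nonneg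

lemma exists_mem_intervalIntegral_norm_sq_le {X E : Type*} [TopologicalSpace X]
    [MeasurableSpace X] [OpensMeasurableSpace X] [SecondCountableTopology X]
    [NormedAddCommGroup E] {μ : Measure X} [SFinite μ] {g : X → ℝ → E} {s t : Set X}
    {a b M : ℝ} (hab : a ≤ b) (hg : ContinuousOn (fun p : X × ℝ => g p.1 p.2) (t ×ˢ Icc a b))
    (hM : ∀ x ∈ t, ∀ y ∈ Icc a b, ‖g x y‖ ≤ M) (ht : MeasurableSet t) (hμt : μ t ≠ ⊤)
    (hs : μ s ≠ 0) (hst : s ⊆ t) :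
    ∃ x ∈ s, ∫ y in a..b, ‖g x y‖ ^ 2 ≤ (∫ y in a..b, ∫ x in t, ‖g x y‖ ^ 2 ∂μ) / μ.real s := by
  have hF : Integrable (Function.uncurry fun x y => ‖g x y‖ ^ 2)
      ((μ.restrict t).prod (volume.restrict (Ioc a b))) :=
    integrable_prod_restrict_of_continuousOn (M := M ^ 2)
      ((hg.mono (prod_mono subset_rfl Ioc_subset_Icc_self)).norm.pow 2) ht measurableSet_Ioc
      hμt measure_Ioc_lt_top.ne fun p hp => by
        simpa [Function.uncurry] using
          pow_le_pow_left₀ (norm_nonneg _) (hM p.1 hp.1 p.2 (Ioc_subset_Icc_self hp.2)) 2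
  simp only [intervalIntegral.integral_of_le hab]
  exact exists_mem_integral_le_integral_integral_div (fun _ _ => by positivity) hF hs hst hμt

lemma sqrt_pow_four_mul_sqrt_sq_div_le {R θ K V : ℝ} (hR : 0 < R) (hθ : 0 < θ) (hK : 0 ≤ K)
    (hV : θ * R ^ 3 ≤ V) : √(R ^ 4) * √(K ^ 2 / V) ≤ (√θ)⁻¹ * K * √R := by
  have hV0 : 0 < V := lt_of_lt_of_le (by positivity) hV
  calc √(R ^ 4) * √(K ^ 2 / V) = √(R * K ^ 2 * (R ^ 3 / V)) := by
        rw [← Real.sqrt_mul (by positivity)]; congr 1; ring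
    _ ≤ √(R * K ^ 2 * θ⁻¹) := by
        gcongr
        rwa [div_le_iff₀ hV0, inv_mul_eq_div, le_div_iff₀' hθ]
    _ = (√θ)⁻¹ * K * √R := by
        rw [Real.sqrt_mul (by positivity), Real.sqrt_mul hR.le, Real.sqrt_sq hK,
          Real.sqrt_inv]
        ring

lemma norm_sub_le_of_integral_sq_deriv_le {E : Type*} [NormedAddCommGroup E]
    [NormedSpace ℝ E] [CompleteSpace E] {f f' : ℝ → E} {a b R θ K V : ℝ} (hab : a ≤ b)
    (hf : ∀ t ∈ Icc a b, HasDerivWithinAt f (f' t) (Icc a b) t)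
    (hf' : ContinuousOn f' (Icc a b)) (hR : 0 < R) (hRab : R ^ 4 = b - a) (hθ : 0 < θ)
    (hK : 0 ≤ K) (hV : θ * R ^ 3 ≤ V) (hf'V : ∫ t in a..b, ‖f' t‖ ^ 2 ≤ K ^ 2 / V) :
    ‖f b - f a‖ ≤ (√θ)⁻¹ * K * √R :=
  calc ‖f b - f a‖ ≤ √(R ^ 4) * √(∫ t in a..b, ‖f' t‖ ^ 2) := by
        simpa only [hRab] using norm_sub_le_sqrt_mul_sqrt_integral_sq hab hf hf'
    _ ≤ √(R ^ 4) * √(K ^ 2 / V) := by gcongr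
    _ ≤ (√θ)⁻¹ * K * √R := sqrt_pow_four_mul_sqrt_sq_div_le hR hθ hK hV

/-- The space-time Hölder estimate (4.2)–(4.4): if `Ω ⊂ ℝ³` is bounded, measurable and
`θ`-regular (`|B_R(x) ∩ Ω| ≥ θ R³` for `x ∈ Ω`, `0 < R ≤ 1`), and `u` is continuous on
`Ω × [t₁,t₂]` (with `t₂ − t₁ ≤ 1`), continuously differentiable in `t` with continuous
bounded time derivative, spatially uniformly Hölder-`1/2` with constant `K`, and
`∫∫ |∂_t u|² ≤ K²`, then `|u(x,t₂) − u(x,t₁)| ≤ C K (t₂ − t₁)^{1/8}` on `Ω`, with `C`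
depending only on `θ`. -/
theorem holder_in_time_from_spatial_holder
    (θ : ℝ) (hθ : 0 < θ) :
    ∃ C : ℝ, 0 < C ∧
      ∀ (Ω : Set (EuclideanSpace ℝ (Fin 3))), MeasurableSet Ω →
        Bornology.IsBounded Ω →
        (∀ x ∈ Ω, ∀ R : ℝ, 0 < R → R ≤ 1 →
          ENNReal.ofReal (θ * R ^ 3) ≤ volume (Metric.ball x R ∩ Ω)) →
        ∀ (t₁ t₂ : ℝ), t₁ < t₂ → t₂ - t₁ ≤ 1 →
        ∀ (K : ℝ), 0 ≤ K →
        ∀ (u ut : EuclideanSpace ℝ (Fin 3) → ℝ → EuclideanSpace ℝ (Fin 3)),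
          ContinuousOn (fun p : EuclideanSpace ℝ (Fin 3) × ℝ => u p.1 p.2)
            (Ω ×ˢ Set.Icc t₁ t₂) →
          (∀ x ∈ Ω, ∀ t ∈ Set.Icc t₁ t₂,
            HasDerivWithinAt (u x) (ut x t) (Set.Icc t₁ t₂) t) →
          ContinuousOn (fun p : EuclideanSpace ℝ (Fin 3) × ℝ => ut p.1 p.2)
            (Ω ×ˢ Set.Icc t₁ t₂) →
          (∃ M : ℝ, ∀ x ∈ Ω, ∀ t ∈ Set.Icc t₁ t₂, ‖ut x t‖ ≤ M) →
          (∀ t ∈ Set.Icc t₁ t₂, ∀ y ∈ Ω, ∀ z ∈ Ω,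
            ‖u y t - u z t‖ ≤ K * ‖y - z‖ ^ ((1 : ℝ) / 2)) →
          (∫ t in t₁..t₂, ∫ y in Ω, ‖ut y t‖ ^ 2) ≤ K ^ 2 →
          ∀ x ∈ Ω, ‖u x t₂ - u x t₁‖ ≤ C * K * (t₂ - t₁) ^ ((1 : ℝ) / 8) := by
  refine ⟨2 + (√θ)⁻¹, by positivity, ?_⟩
  intro Ω hΩ hΩb hreg t₁ t₂ h12 hΔ1 K hK u ut _ hu hut ⟨M, hM⟩ hHolder hint x hx
  have hΔ : 0 < t₂ - t₁ := sub_pos.2 h12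
  set R := (t₂ - t₁) ^ (1 / 4 : ℝ)
  have hR : 0 < R := by positivity
  have hR4 : R ^ 4 = t₂ - t₁ := by
    rw [← Real.rpow_natCast, ← Real.rpow_mul hΔ.le]; norm_num
  have hsqrtR : √R = (t₂ - t₁) ^ (1 / 8 : ℝ) := by
    rw [Real.sqrt_eq_rpow, ← Real.rpow_mul hΔ.le]; norm_num
  set A := Metric.ball x R ∩ Ω
  have hΩfin : volume Ω ≠ ⊤ := hΩb.measure_lt_top.ne
  have hAfin : volume A ≠ ⊤ := measure_ne_top_of_subset inter_subset_right hΩfin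
  have hVA : θ * R ^ 3 ≤ volume.real A := (ENNReal.ofReal_le_iff_le_toReal hAfin).1
    (hreg x hx R hR (Real.rpow_le_one hΔ.le hΔ1 (by norm_num)))
  have hA0 : volume A ≠ 0 :=
    (measureReal_ne_zero_iff hAfin).1 (lt_of_lt_of_le (by positivity) hVA).ne'
  obtain ⟨y, ⟨hxy, hyΩ⟩, hy⟩ := exists_mem_intervalIntegral_norm_sq_le h12.le hut hM hΩ hΩfin
    hA0 inter_subset_right
  have htime : ‖u y t₂ - u y t₁‖ ≤ (√θ)⁻¹ * K * √R :=
    norm_sub_le_of_integral_sq_deriv_le h12.le (hu y hyΩ)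
      (hut.comp (Continuous.prodMk_right y).continuousOn fun _ ht => ⟨hyΩ, ht⟩) hR hR4 hθ hK hVA
      (hy.trans (div_le_div_of_nonneg_right hint measureReal_nonneg))
  have hspace : ∀ t ∈ Icc t₁ t₂, ‖u x t - u y t‖ ≤ K * √R := fun t ht => by
    refine (hHolder t ht x hx y hyΩ).trans ?_
    rw [← Real.sqrt_eq_rpow, ← dist_eq_norm]
    gcongr
    exact (Metric.mem_ball'.1 hxy).le
  calc ‖u x t₂ - u x t₁‖ ≤ ‖u x t₂ - u y t₂‖ + ‖u y t₂ - u y t₁‖ + ‖u y t₁ - u x t₁‖ := by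
        simpa only [dist_eq_norm] using dist_triangle4 (u x t₂) (u y t₂) (u y t₁) (u x t₁)
    _ ≤ K * √R + (√θ)⁻¹ * K * √R + K * √R := by
        gcongr
        · exact hspace t₂ (right_mem_Icc.2 h12.le)
        · rw [norm_sub_rev]
          exact hspace t₁ (left_mem_Icc.2 h12.le)
    _ = (2 + (√θ)⁻¹) * K * (t₂ - t₁) ^ (1 / 8 : ℝ) := by rw [← hsqrtR]; ring
end
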